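/- Let 0 < q < 1 and a, v > 0 with |a| < v. The first-type q-Laplace transform L_q(f)(v) = N_q(f)(1;v) satisfies L_q(e_q(a x))(v) = 1/(v - a). -/

import Mathlib

/-- The q-Pochhammer symbol `(a;q)_n`. -/
noncomputable def qPoch (q a : ℝ) (n : ℕ) : ℝ := ∏ k ∈ Finset.range n, (1 - a * q ^ k)

/-- `(a;q)_∞`. -/
noncomputable def qPochInf (q a : ℝ) : ℝ := ∏' k : ℕ, (1 - a * q ^ k)

/-- The q-exponential `e_q(t) = ∑_{n≥0} t^n/(q;q)_n`. -/
noncomputable def qExp (q t : ℝ) : ℝ := ∑' n : ℕ, t ^ n / qPoch q q n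

/-- The first-type q-Natural transform. -/
noncomputable def qNatural (q : ℝ) (f : ℝ → ℝ) (u v : ℝ) : ℝ :=
  qPochInf q q / v * ∑' k : ℕ, q ^ k * f (u / v * q ^ k) / qPoch q q k

/-- The first-type q-Laplace transform `L_q(f)(v) = N_q(f)(1;v)`. -/
noncomputable def qLaplace (q : ℝ) (f : ℝ → ℝ) (v : ℝ) : ℝ := qNatural q f 1 v

/-! Put `r = a u / v`. Expanding `e_q(r q^k)` and summing over `k` first turns `N_q(e_q(a x))(u; v)`
into `(q;q)_∞ / v · ∑ₙ rⁿ e_q(q^{n+1}) / (q;q)ₙ`. The q-difference equation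
`(1 - t) e_q(t) = e_q(q t)` gives `e_q(q^{n+1}) = (q;q)ₙ e_q(q)`, so the series is geometric;
letting `n → ∞` in the same identity, with `e_q` continuous at `0`, gives `(q;q)_∞ e_q(q) = 1`. -/

open Filter Finset Topology

section QPochhammer

variable {q : ℝ}

@[simp]
lemma qPoch_zero (a : ℝ) : qPoch q a 0 = 1 := by simp [qPoch]

lemma qPoch_self_succ (n : ℕ) : qPoch q q (n + 1) = qPoch q q n * (1 - q ^ (n + 1)) := by
  rw [qPoch, prod_range_succ, ← qPoch, pow_succ']

lemma one_sub_pow_pos (hq : |q| < 1) {n : ℕ} (hn : n ≠ 0) : 0 < 1 - q ^ n := by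
  have : |q| ^ n < 1 := pow_lt_one₀ (abs_nonneg q) hq hn
  linarith [le_abs_self (q ^ n), abs_pow q n]

lemma qPoch_self_pos (hq : |q| < 1) (n : ℕ) : 0 < qPoch q q n :=
  prod_pos fun k _ => by rw [← pow_succ']; exact one_sub_pow_pos hq k.succ_ne_zero

lemma multipliable_one_sub_mul_pow (hq : |q| < 1) : Multipliable fun k : ℕ => 1 - q * q ^ k := by
  simpa [sub_eq_add_neg] using Real.multipliable_one_add_of_summable
    ((summable_geometric_of_abs_lt_one hq).mul_left q).neg

end QPochhammer

section QExp

variable {q : ℝ}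

lemma summable_norm_pow_div_qPoch (hq : |q| < 1) {t : ℝ} (ht : |t| < 1) :
    Summable fun n : ℕ => ‖t ^ n / qPoch q q n‖ := by
  have hratio : Tendsto (fun n : ℕ => |t| / (1 - q ^ (n + 1))) atTop (𝓝 |t|) := by
    have hpow := (tendsto_pow_atTop_nhds_zero_of_abs_lt_one hq).comp (tendsto_add_atTop_nat 1)
    have hden : Tendsto (fun n : ℕ => 1 - q ^ (n + 1)) atTop (𝓝 1) := by
      simpa using tendsto_const_nhds.sub hpow
    simpa [div_eq_mul_inv] using (hden.inv₀ one_ne_zero).const_mul |t|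
  refine summable_of_ratio_norm_eventually_le (r := (|t| + 1) / 2) (by linarith) ?_
  filter_upwards [hratio.eventually_le_const (by linarith : |t| < (|t| + 1) / 2)] with n hn
  have hfac := one_sub_pow_pos hq n.succ_ne_zero
  have hP := qPoch_self_pos hq n
  rw [norm_norm, norm_norm, qPoch_self_succ, pow_succ, Real.norm_eq_abs, Real.norm_eq_abs,
    abs_div, abs_div, abs_mul, abs_mul, abs_of_pos hP, abs_of_pos hfac]
  calc |t ^ n| * |t| / (qPoch q q n * (1 - q ^ (n + 1)))
      = |t| / (1 - q ^ (n + 1)) * (|t ^ n| / qPoch q q n) := by field_simp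
    _ ≤ (|t| + 1) / 2 * (|t ^ n| / qPoch q q n) := by gcongr

lemma summable_pow_div_qPoch (hq : |q| < 1) {t : ℝ} (ht : |t| < 1) :
    Summable fun n : ℕ => t ^ n / qPoch q q n :=
  (summable_norm_pow_div_qPoch hq ht).of_norm

lemma one_sub_mul_qExp (hq : |q| < 1) {t : ℝ} (ht : |t| < 1) :
    (1 - t) * qExp q t = qExp q (q * t) := by
  have hqt : |q * t| < 1 := by
    rw [abs_mul]; nlinarith [abs_nonneg q, abs_nonneg t]
  have hS := summable_pow_div_qPoch hq ht
  have hterm (n : ℕ) : (q * t) ^ (n + 1) / qPoch q q (n + 1)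
      = t ^ (n + 1) / qPoch q q (n + 1) - t * (t ^ n / qPoch q q n) := by
    have := one_sub_pow_pos hq n.succ_ne_zero
    have := qPoch_self_pos hq n
    rw [qPoch_self_succ]; field_simp; ring
  have hshift (s : ℝ) (hs : |s| < 1) :
      qExp q s = 1 + ∑' n : ℕ, s ^ (n + 1) / qPoch q q (n + 1) := by
    rw [qExp, (summable_pow_div_qPoch hq hs).tsum_eq_zero_add]; simp
  rw [hshift _ hqt, tsum_congr hterm,
    ((summable_nat_add_iff 1).mpr hS).tsum_sub (hS.mul_left t), tsum_mul_left, ← qExp]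
  linear_combination hshift t ht

@[simp]
lemma qExp_zero (q : ℝ) : qExp q 0 = 1 := by
  simp [qExp, zero_pow_eq, ite_div]

lemma qExp_pow_succ (hq : |q| < 1) (n : ℕ) : qExp q (q ^ (n + 1)) = qPoch q q n * qExp q q := by
  induction n with
  | zero => simp
  | succ n ih =>
    have hpow : |q ^ (n + 1)| < 1 := by
      rw [abs_pow]; exact pow_lt_one₀ (abs_nonneg q) hq n.succ_ne_zero
    rw [pow_succ', ← one_sub_mul_qExp hq hpow, ih, qPoch_self_succ]
    ring

lemma tendsto_qExp_nhds_zero (hq : |q| < 1) : Tendsto (qExp q) (𝓝 0) (𝓝 1) := by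
  have hbound : ∀ᶠ t in 𝓝 (0 : ℝ), ∀ n : ℕ,
      ‖t ^ n / qPoch q q n‖ ≤ ‖(1 / 2 : ℝ) ^ n / qPoch q q n‖ := by
    filter_upwards [Metric.closedBall_mem_nhds (0 : ℝ) (by norm_num : (0 : ℝ) < 1 / 2)] with t ht n
    rw [Metric.mem_closedBall, dist_zero_right] at ht
    simp only [norm_div, norm_pow]
    gcongr
    simpa using ht
  have hlim := tendsto_tsum_of_dominated_convergence
    (summable_norm_pow_div_qPoch hq (by norm_num : |(1 / 2 : ℝ)| < 1))
    (fun n => ((continuous_pow n).tendsto 0).div_const (qPoch q q n)) hbound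
  rwa [← qExp_zero q]

lemma qPochInf_self_mul_qExp_self (hq : |q| < 1) : qPochInf q q * qExp q q = 1 := by
  have hprod : Tendsto (fun n => qPoch q q n * qExp q q) atTop (𝓝 (qPochInf q q * qExp q q)) :=
    (multipliable_one_sub_mul_pow hq).hasProd.tendsto_prod_nat.mul_const _
  have hexp : Tendsto (fun n => qExp q (q ^ (n + 1))) atTop (𝓝 1) :=
    (tendsto_qExp_nhds_zero hq).comp
      ((tendsto_pow_atTop_nhds_zero_of_abs_lt_one hq).comp (tendsto_add_atTop_nat 1))
  exact tendsto_nhds_unique hprod (hexp.congr (qExp_pow_succ hq))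

end QExp

section QLaplace

variable {q : ℝ}

lemma tsum_pow_mul_qExp_mul_pow_div_qPoch (hq : |q| < 1) {r : ℝ} (hr : |r| < 1) :
    ∑' k : ℕ, q ^ k * qExp q (r * q ^ k) / qPoch q q k = qExp q q / (1 - r) := by
  set F : ℕ → ℕ → ℝ := fun k n => q ^ k / qPoch q q k * ((r * q ^ k) ^ n / qPoch q q n)
  have hF_swap (k n : ℕ) : F k n = r ^ n / qPoch q q n * ((q ^ (n + 1)) ^ k / qPoch q q k) := by
    simp only [F]; ring
  have hF : Summable (Function.uncurry F) := by
    refine .of_norm_bounded ((summable_norm_pow_div_qPoch hq hq).mul_norm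
      (summable_norm_pow_div_qPoch hq hr)) fun ⟨k, n⟩ => ?_
    have hqk : |q| ^ k ≤ 1 := pow_le_one₀ (abs_nonneg q) hq.le
    simp only [Function.uncurry, F, norm_mul, norm_div, norm_pow, Real.norm_eq_abs]
    gcongr
    exact mul_le_of_le_one_right (abs_nonneg r) hqk
  calc ∑' k : ℕ, q ^ k * qExp q (r * q ^ k) / qPoch q q k
      = ∑' k : ℕ, ∑' n : ℕ, F k n := by
        refine tsum_congr fun k => ?_
        rw [tsum_mul_left, qExp, mul_div_right_comm]
    _ = ∑' n : ℕ, ∑' k : ℕ, F k n := hF.tsum_comm.symm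
    _ = ∑' n : ℕ, qExp q q * r ^ n := by
        refine tsum_congr fun n => ?_
        have := (qPoch_self_pos hq n).ne'
        rw [tsum_congr (hF_swap · n), tsum_mul_left, ← qExp, qExp_pow_succ hq]
        field_simp
    _ = qExp q q / (1 - r) := by
        rw [tsum_mul_left, tsum_geometric_of_abs_lt_one hr, div_eq_mul_inv]

lemma qNatural_qExp_mul (hq : |q| < 1) {a u v : ℝ} (h : |a * u| < |v|) :
    qNatural q (fun x => qExp q (a * x)) u v = 1 / (v - a * u) := by
  have hv : v ≠ 0 := abs_pos.mp ((abs_nonneg _).trans_lt h)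
  have hr : |a * u / v| < 1 := by rwa [abs_div, div_lt_one (abs_pos.mpr hv)]
  simp only [qNatural, ← mul_assoc, mul_div_assoc']
  rw [tsum_pow_mul_qExp_mul_pow_div_qPoch hq hr, div_mul_div_comm,
    qPochInf_self_mul_qExp_self hq, mul_one_sub, mul_div_cancel₀ _ hv]

end QLaplace

theorem qLaplace_qExp_general (q a v : ℝ) (hq0 : 0 < q) (hq1 : q < 1)
    (h : |a| < v) :
    qLaplace q (fun x => qExp q (a * x)) v = 1 / (v - a) := by
  have hq : |q| < 1 := abs_lt.mpr ⟨by linarith, hq1⟩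
  rw [qLaplace, qNatural_qExp_mul hq (by rwa [mul_one, abs_of_pos ((abs_nonneg a).trans_lt h)]),
    mul_one]

/-- For `0 < q < 1`, `a, v > 0` with `|a| < v`, `L_q(e_q(a x))(v) = 1/(v - a)`. -/
theorem qLaplace_qExp (q a v : ℝ) (hq0 : 0 < q) (hq1 : q < 1)
    (ha : 0 < a) (hv : 0 < v) (h : |a| < v) :
    qLaplace q (fun x => qExp q (a * x)) v = 1 / (v - a) :=
  qLaplace_qExp_general q a v hq0 hq1 h
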